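/- If two segments a₁b₁ and a₂b₂ in the plane both contain the point s in their supporting lines, with s in the relative interior of both sb₁-configurations (i.e., a₁ ∈ relint(s b₁) and a₂ ∈ relint(s b₂)), and the two segments lie on distinct lines through s, then no line segment can cross both a₁b₁ and a₂b₂ while lying strictly on the right side of both directed lines →a₁b₁ and →a₂b₂. -/
import Mathlib


/-- 2D cross product determinant. -/
def det2 (u v : ℝ × ℝ) : ℝ := u.1 * v.2 - u.2 * v.1

/-- `x` lies strictly on the right side of the directed line from `a` to `b`. -/
def strictlyRight (a b x : ℝ × ℝ) : Prop := det2 (b - a) (x - a) < 0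

lemma det2_formula (c d e : ℝ) (v w : ℝ × ℝ) :
    det2 (c • v) (d • v + e • w) = c * e * det2 v w := by
  simp [det2, Prod.smul_fst, Prod.smul_snd]
  ring

lemma det2_antisymm (v w : ℝ × ℝ) : det2 w v = - det2 v w := by
  simp [det2]; ring

theorem no_chord_crosses_two_left_windows (s a₁ b₁ a₂ b₂ : ℝ × ℝ)
    (h₁ : a₁ ∈ openSegment ℝ s b₁) (h₂ : a₂ ∈ openSegment ℝ s b₂)
    (hlines : ¬ Collinear ℝ ({s, b₁, b₂} : Set (ℝ × ℝ))) :
    ¬ ∃ p q : ℝ × ℝ, p ∈ openSegment ℝ a₁ b₁ ∧ q ∈ openSegment ℝ a₂ b₂ ∧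
      ∀ x ∈ openSegment ℝ p q, strictlyRight a₁ b₁ x ∧ strictlyRight a₂ b₂ x := by
  rintro ⟨p, q, hp, hq, hchord⟩
  obtain ⟨u₁, v₁, hu₁, hv₁, huv₁, ha₁⟩ := h₁
  obtain ⟨u₂, v₂, hu₂, hv₂, huv₂, ha₂⟩ := h₂
  obtain ⟨w₁, z₁, hw₁, hz₁, hwz₁, hp₁⟩ := hp
  obtain ⟨w₂, z₂, hw₂, hz₂, hwz₂, hq₂⟩ := hq
  -- a₁ = s + v₁ • (b₁ - s), similarly for a₂
  have ea₁ : a₁ = s + v₁ • (b₁ - s) := by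
    rw [← ha₁, show u₁ = 1 - v₁ by linarith]; module
  have ea₂ : a₂ = s + v₂ • (b₂ - s) := by
    rw [← ha₂, show u₂ = 1 - v₂ by linarith]; module
  have eb₁ : b₁ - a₁ = u₁ • (b₁ - s) := by
    rw [ea₁, show v₁ = 1 - u₁ by linarith]; module
  have eb₂ : b₂ - a₂ = u₂ • (b₂ - s) := by
    rw [ea₂, show v₂ = 1 - u₂ by linarith]; module
  set α : ℝ := w₁ * v₁ + z₁ with hα
  set β : ℝ := w₂ * v₂ + z₂ with hβ
  have hαpos : 0 < α := by positivity
  have hβpos : 0 < β := by positivity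
  have ep : p = s + α • (b₁ - s) := by
    rw [← hp₁, ea₁, hα, show z₁ = 1 - w₁ by linarith]; module
  have eq : q = s + β • (b₂ - s) := by
    rw [← hq₂, ea₂, hβ, show z₂ = 1 - w₂ by linarith]; module
  -- the midpoint of p q
  set x : ℝ × ℝ := (1/2 : ℝ) • p + (1/2 : ℝ) • q with hx
  have hxmem : x ∈ openSegment ℝ p q :=
    ⟨1/2, 1/2, by norm_num, by norm_num, by norm_num, rfl⟩
  obtain ⟨hr₁, hr₂⟩ := hchord x hxmem
  have ex₁ : x - a₁ = (α/2 - v₁) • (b₁ - s) + (β/2) • (b₂ - s) := by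
    rw [hx, ep, eq, ea₁]; module
  have ex₂ : x - a₂ = (β/2 - v₂) • (b₂ - s) + (α/2) • (b₁ - s) := by
    rw [hx, ep, eq, ea₂]; module
  have H₁ : u₁ * (β/2) * det2 (b₁ - s) (b₂ - s) < 0 := by
    have := hr₁
    rwa [strictlyRight, eb₁, ex₁, det2_formula] at this
  have H₂ : u₂ * (α/2) * det2 (b₂ - s) (b₁ - s) < 0 := by
    have := hr₂
    rwa [strictlyRight, eb₂, ex₂, det2_formula] at this
  rw [det2_antisymm] at H₂
  have hc1 : det2 (b₁ - s) (b₂ - s) < 0 := by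
    by_contra hcon
    push_neg at hcon
    nlinarith [mul_nonneg (le_of_lt (mul_pos hu₁ hβpos)) hcon]
  have hc2 : 0 < det2 (b₁ - s) (b₂ - s) := by
    by_contra hcon
    push_neg at hcon
    nlinarith [mul_nonneg (le_of_lt (mul_pos hu₂ hαpos)) (neg_nonneg.mpr hcon)]
  linarith
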